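/- Hard thresholding approximation error bound: if a* ∈ ℝ^d satisfies ‖a*‖_0 ≤ s and τ_s ≥ s, then for any a ∈ ℝ^d, ‖Truncate(a, τ_s) − a*‖_2 ≤ (1 + 2√(s/(τ_s − s + s)))·‖a − a*‖_2; in particular ‖Truncate(a, τ_s) − a*‖_2 ≤ 3‖a − a*‖_2 when τ_s ≥ s. -/
import Mathlib


open Finset in
/-- Hard thresholding approximation error bound: if `a*` satisfies
`‖a*‖₀ ≤ s` and `s ≤ τ_s`, and `S` is a set of `τ_s` indices of entries of `a`
with the largest absolute values, then
`‖Truncate(a, τ_s) − a*‖₂ ≤ 3‖a − a*‖₂`. -/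
theorem truncate_error_bound (d τs s : ℕ) (hsτ : s ≤ τs) (a astar : Fin d → ℝ)
    (S : Finset (Fin d)) (hcard : S.card = τs)
    (htop : ∀ j ∈ S, ∀ k ∉ S, |a k| ≤ |a j|)
    (hstar : (univ.filter (fun j => astar j ≠ 0)).card ≤ s) :
    Real.sqrt (∑ j, ((if j ∈ S then a j else 0) - astar j) ^ 2) ≤
      3 * Real.sqrt (∑ j, (a j - astar j) ^ 2) := by
  set T : Finset (Fin d) := univ.filter (fun j => astar j ≠ 0) with hT
  have hTzero : ∀ j, j ∉ T → astar j = 0 := by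
    intro j hj
    by_contra h
    exact hj (by simp [hT, h])
  set E : ℝ := ∑ j, (a j - astar j) ^ 2 with hE
  have hEnn : 0 ≤ E := Finset.sum_nonneg fun j _ => sq_nonneg _
  -- cardinality comparison
  have hcards : (T \ S).card ≤ (S \ T).card := by
    have h1 : (T \ S).card + (T ∩ S).card = T.card := Finset.card_sdiff_add_card_inter T S
    have h2 : (S \ T).card + (S ∩ T).card = S.card := Finset.card_sdiff_add_card_inter S T
    have h3 : (T ∩ S).card = (S ∩ T).card := by rw [Finset.inter_comm]
    have hTs : T.card ≤ s := hstar
    have hSc : S.card = τs := hcard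
    omega
  -- key: sum of a² over T\S bounded by sum over S\T
  have hkey : ∑ j ∈ T \ S, (a j) ^ 2 ≤ ∑ j ∈ S \ T, (a j) ^ 2 := by
    rcases Finset.eq_empty_or_nonempty (T \ S) with h | h
    · rw [h, Finset.sum_empty]
      exact Finset.sum_nonneg fun j _ => sq_nonneg _
    · have hSne : S.Nonempty := by
        rw [← Finset.card_pos]
        have h1 := Finset.card_pos.mpr h
        have h2 : (S \ T).card ≤ S.card := Finset.card_le_card Finset.sdiff_subset
        omega
      obtain ⟨j₀, hj₀S, hj₀min⟩ := Finset.exists_min_image S (fun k => (a k) ^ 2) hSne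
      have hstep1 : ∑ j ∈ T \ S, (a j) ^ 2 ≤ ((T \ S).card : ℝ) * (a j₀) ^ 2 := by
        have hle : ∑ j ∈ T \ S, (a j) ^ 2 ≤ ∑ _j ∈ T \ S, (a j₀) ^ 2 := by
          apply Finset.sum_le_sum
          intro j hj
          have hjnS : j ∉ S := (Finset.mem_sdiff.mp hj).2
          have habs := htop j₀ hj₀S j hjnS
          nlinarith [abs_nonneg (a j), sq_abs (a j), sq_abs (a j₀)]
        simpa [Finset.sum_const, nsmul_eq_mul] using hle
      have hstep2 : ((S \ T).card : ℝ) * (a j₀) ^ 2 ≤ ∑ j ∈ S \ T, (a j) ^ 2 := by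
        calc ((S \ T).card : ℝ) * (a j₀) ^ 2 = ∑ _j ∈ S \ T, (a j₀) ^ 2 := by
              rw [Finset.sum_const, nsmul_eq_mul]
          _ ≤ ∑ j ∈ S \ T, (a j) ^ 2 := by
              apply Finset.sum_le_sum
              intro j hj
              exact hj₀min j (Finset.mem_sdiff.mp hj).1
      have hmono : ((T \ S).card : ℝ) * (a j₀) ^ 2 ≤ ((S \ T).card : ℝ) * (a j₀) ^ 2 := by
        apply mul_le_mul_of_nonneg_right _ (sq_nonneg _)
        exact_mod_cast hcards
      linarith
  -- split LHS sum
  have hsplit : ∑ j, ((if j ∈ S then a j else 0) - astar j) ^ 2 =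
      ∑ j ∈ S, (a j - astar j) ^ 2 + ∑ j ∈ Sᶜ, (astar j) ^ 2 := by
    rw [← Finset.sum_add_sum_compl S]
    congr 1
    · exact Finset.sum_congr rfl fun j hj => by simp [hj]
    · exact Finset.sum_congr rfl fun j hj => by
        simp only [Finset.mem_compl] at hj
        simp [hj]
  -- astar vanishes outside T, so ∑_{Sᶜ} astar² = ∑_{T\S} astar²
  have hcompl : ∑ j ∈ Sᶜ, (astar j) ^ 2 = ∑ j ∈ T \ S, (astar j) ^ 2 := by
    refine (Finset.sum_subset ?_ ?_).symm
    · intro j hj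
      exact Finset.mem_compl.mpr (Finset.mem_sdiff.mp hj).2
    · intro j hj hj2
      have hjT : j ∉ T := fun h =>
        hj2 (Finset.mem_sdiff.mpr ⟨h, Finset.mem_compl.mp hj⟩)
      simp [hTzero j hjT]
  -- astar² ≤ 2(a-astar)² + 2a²
  have hsq : ∀ j, (astar j) ^ 2 ≤ 2 * (a j - astar j) ^ 2 + 2 * (a j) ^ 2 := by
    intro j; nlinarith [sq_nonneg (2 * a j - astar j)]
  have hsumT : ∑ j ∈ T \ S, (astar j) ^ 2 ≤
      2 * ∑ j ∈ T \ S, (a j - astar j) ^ 2 + 2 * ∑ j ∈ S \ T, (a j) ^ 2 := by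
    calc ∑ j ∈ T \ S, (astar j) ^ 2
        ≤ ∑ j ∈ T \ S, (2 * (a j - astar j) ^ 2 + 2 * (a j) ^ 2) :=
          Finset.sum_le_sum fun j _ => hsq j
      _ = 2 * ∑ j ∈ T \ S, (a j - astar j) ^ 2 + 2 * ∑ j ∈ T \ S, (a j) ^ 2 := by
          rw [Finset.sum_add_distrib, Finset.mul_sum, Finset.mul_sum]
      _ ≤ _ := by linarith
  -- on S\T, astar = 0 so a² = (a-astar)²
  have hST : ∑ j ∈ S \ T, (a j) ^ 2 = ∑ j ∈ S \ T, (a j - astar j) ^ 2 := by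
    apply Finset.sum_congr rfl
    intro j hj
    rw [hTzero j (Finset.mem_sdiff.mp hj).2, sub_zero]
  -- each partial sum ≤ E
  have hsubE : ∀ (U : Finset (Fin d)), ∑ j ∈ U, (a j - astar j) ^ 2 ≤ E := by
    intro U
    exact Finset.sum_le_sum_of_subset_of_nonneg (Finset.subset_univ U)
      (fun j _ _ => sq_nonneg _)
  have hmain : ∑ j, ((if j ∈ S then a j else 0) - astar j) ^ 2 ≤ 9 * E := by
    rw [hsplit, hcompl]
    have h1 := hsubE S
    have h2 := hsubE (T \ S)
    have h3 := hsubE (S \ T)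
    rw [hST] at hsumT
    linarith
  calc Real.sqrt (∑ j, ((if j ∈ S then a j else 0) - astar j) ^ 2)
      ≤ Real.sqrt (9 * E) := Real.sqrt_le_sqrt hmain
    _ = 3 * Real.sqrt E := by
        rw [show (9:ℝ) * E = 3^2 * E by ring, Real.sqrt_mul (by positivity),
          Real.sqrt_sq (by norm_num)]
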